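/- Let n ≥ 2 and γ ≥ 0. Define on [0,1]^n the functions π⁽⁰⁾(p) = p̄ and π⁽¹⁾(p) = −p̄{(n−1) + nγ(1−p̄)} + (2/n)∑_{i<j} pᵢpⱼ, where p̄ = (1/n)∑ᵢ pᵢ. Then L₀ π⁽¹⁾ = L₁ π⁽⁰⁾, where L₀ = ∑ᵢ (xᵢ(1−xᵢ)/2) ∂²/∂xᵢ² + (nγ/(2(n−1))) ∑ᵢ (x̄ − xᵢ) ∂/∂xᵢ and L₁ = (γ/(2(n−1))) ∑ᵢ {(1−2xᵢ)∑_{j≠i} xⱼ + (n−1)xᵢ} ∂/∂xᵢ. Consequently π = π⁽⁰⁾ + b π⁽¹⁾ satisfies (L₀ − bL₁)π = O(b²), i.e., L₀π⁽⁰⁾ = 0 and the first-order-in-b terms cancel. -/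

import Mathlib

/-- Partial derivative of `f : (Fin n → ℝ) → ℝ` in coordinate `i` at `p`. -/
noncomputable def pderiv' {n : ℕ} (f : (Fin n → ℝ) → ℝ) (i : Fin n) (p : Fin n → ℝ) : ℝ :=
  deriv (fun t => f (Function.update p i t)) (p i)

/-- Second partial derivative of `f` in coordinate `i` at `p`. -/
noncomputable def pderiv2' {n : ℕ} (f : (Fin n → ℝ) → ℝ) (i : Fin n) (p : Fin n → ℝ) : ℝ :=
  deriv (deriv (fun t => f (Function.update p i t))) (p i)

/-!
Since `∑_{i<j} pᵢ pⱼ = (S² - Q) / 2` with `S = ∑ pᵢ` and `Q = ∑ pᵢ²`, both `π⁽⁰⁾` and `π⁽¹⁾` are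
symmetric quadratics `α S + β S² + δ Q`. On a coordinate line such a function is a quadratic
polynomial in the free coordinate, so its first and second partial derivatives are
`α + 2βS + 2δpᵢ` and `2(β + δ)`. As `∑ᵢ (S/n - pᵢ) = 0`, the drift of `L₀` only sees the `2δpᵢ`
part of the gradient, and `L₀`, `L₁` applied to these functions become explicit polynomials in
`S` and `Q`, which agree for the chosen coefficients.
-/

open Finset

theorem two_mul_sum_sum_ite_lt {ι : Type*} [Fintype ι] [LinearOrder ι] (f : ι → ℝ) :
    2 * ∑ i, ∑ j, (if i < j then f i * f j else 0) = (∑ i, f i) ^ 2 - ∑ i, f i ^ 2 := by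
  have split : ∀ i j, f i * f j = (if i < j then f i * f j else 0)
      + (if j < i then f j * f i else 0) + (if i = j then f i * f j else 0) := by
    intro i j
    rcases lt_trichotomy i j with h | rfl | h
    · simp [h, h.not_gt, h.ne]
    · simp only [lt_irrefl, if_false, if_true, zero_add]
    · simp [h, h.not_gt, h.ne', mul_comm]
  have diag : ∑ i, ∑ j, (if i = j then f i * f j else 0) = ∑ i, f i ^ 2 := by
    simp [sq]
  have expand : (∑ i, f i) ^ 2 = ∑ i, ∑ j, (if i < j then f i * f j else 0)
      + ∑ i, ∑ j, (if j < i then f j * f i else 0)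
      + ∑ i, ∑ j, (if i = j then f i * f j else 0) := by
    simp only [← sum_add_distrib]
    rw [sq, sum_mul_sum]
    exact sum_congr rfl fun i _ => sum_congr rfl fun j _ => split i j
  rw [expand, diag, sum_comm (f := fun i j => if j < i then f j * f i else 0)]
  ring

theorem sum_update_eq_add_sub {ι M : Type*} [Fintype ι] [DecidableEq ι] [AddCommGroup M]
    (p : ι → M) (i : ι) (t : M) :
    ∑ j, Function.update p i t j = t + (∑ j, p j - p i) := by
  rw [sum_update_of_mem (mem_univ i), ← erase_eq, sum_erase_eq_sub (mem_univ i)]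

section SymmetricQuadratic

variable {n : ℕ}

def symmetricQuadratic (α β δ : ℝ) (p : Fin n → ℝ) : ℝ :=
  α * ∑ i, p i + β * (∑ i, p i) ^ 2 + δ * ∑ i, p i ^ 2

theorem sum_quadratic (p : Fin n → ℝ) (a b c : ℝ) :
    ∑ i, (a + b * p i + c * p i ^ 2) = n * a + b * ∑ i, p i + c * ∑ i, p i ^ 2 := by
  simp [sum_add_distrib, mul_sum]

theorem symmetricQuadratic_update (α β δ : ℝ) (p : Fin n → ℝ) (i : Fin n) (t : ℝ) :
    symmetricQuadratic α β δ (Function.update p i t) =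
      (β + δ) * t ^ 2 + (α + 2 * β * (∑ j, p j - p i)) * t
        + (α * (∑ j, p j - p i) + β * (∑ j, p j - p i) ^ 2 + δ * (∑ j, p j ^ 2 - p i ^ 2)) := by
  have hsq : ∑ j, Function.update p i t j ^ 2 = t ^ 2 + (∑ j, p j ^ 2 - p i ^ 2) := by
    rw [← sum_update_eq_add_sub]
    congr 1 with j
    rw [Function.update_apply, Function.update_apply]
    split_ifs <;> rfl
  rw [symmetricQuadratic, sum_update_eq_add_sub, hsq]
  ring

theorem hasDerivAt_symmetricQuadratic_update (α β δ : ℝ) (p : Fin n → ℝ) (i : Fin n) (t : ℝ) :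
    HasDerivAt (fun s => symmetricQuadratic α β δ (Function.update p i s))
      (2 * (β + δ) * t + (α + 2 * β * (∑ j, p j - p i))) t := by
  simp_rw [symmetricQuadratic_update]
  have := (((hasDerivAt_pow 2 t).const_mul (β + δ)).add
    ((hasDerivAt_id t).const_mul (α + 2 * β * (∑ j, p j - p i)))).add_const
    (α * (∑ j, p j - p i) + β * (∑ j, p j - p i) ^ 2 + δ * (∑ j, p j ^ 2 - p i ^ 2))
  exact this.congr_deriv (by push_cast; ring)

theorem pderiv'_symmetricQuadratic (α β δ : ℝ) (p : Fin n → ℝ) (i : Fin n) :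
    pderiv' (symmetricQuadratic α β δ) i p = α + 2 * β * ∑ j, p j + 2 * δ * p i := by
  rw [pderiv', (hasDerivAt_symmetricQuadratic_update α β δ p i (p i)).deriv]
  ring

theorem pderiv2'_symmetricQuadratic (α β δ : ℝ) (p : Fin n → ℝ) (i : Fin n) :
    pderiv2' (symmetricQuadratic α β δ) i p = 2 * (β + δ) := by
  have hderiv : deriv (fun s => symmetricQuadratic α β δ (Function.update p i s)) =
      fun t => 2 * (β + δ) * t + (α + 2 * β * (∑ j, p j - p i)) :=
    funext fun t => (hasDerivAt_symmetricQuadratic_update α β δ p i t).deriv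
  rw [pderiv2', hderiv]
  exact (((hasDerivAt_id _).const_mul _).add_const _).deriv.trans (mul_one _)

/-- The operator `L₀` of the n-island model with scaled migration rate `γ`. -/
noncomputable def neutralGenerator (γ : ℝ) (f : (Fin n → ℝ) → ℝ) (p : Fin n → ℝ) : ℝ :=
  (∑ i, p i * (1 - p i) / 2 * pderiv2' f i p)
    + ((n : ℝ) * γ / (2 * ((n : ℝ) - 1))) * ∑ i, ((∑ j, p j) / n - p i) * pderiv' f i p

/-- The operator `L₁` multiplying the migration bias `b` in `L = L₀ - b L₁`. -/
noncomputable def biasGenerator (γ : ℝ) (f : (Fin n → ℝ) → ℝ) (p : Fin n → ℝ) : ℝ :=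
  (γ / (2 * ((n : ℝ) - 1))) *
    ∑ i, ((1 - 2 * p i) * (∑ j ∈ univ.erase i, p j) + ((n : ℝ) - 1) * p i) * pderiv' f i p

theorem neutralGenerator_symmetricQuadratic (hn : n ≠ 0) (γ α β δ : ℝ) (p : Fin n → ℝ) :
    neutralGenerator γ (symmetricQuadratic α β δ) p =
      (β + δ) * (∑ j, p j - ∑ j, p j ^ 2)
        + (n * γ / (2 * (n - 1))) * (2 * δ * ((∑ j, p j) ^ 2 / n - ∑ j, p j ^ 2)) := by
  set S := ∑ j, p j
  have hdiffusion : ∑ i, p i * (1 - p i) / 2 * pderiv2' (symmetricQuadratic α β δ) i p =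
      (β + δ) * (S - ∑ j, p j ^ 2) :=
    calc _ = ∑ i, (0 + (β + δ) * p i + -(β + δ) * p i ^ 2) :=
          sum_congr rfl fun i _ => by rw [pderiv2'_symmetricQuadratic]; ring
      _ = _ := by rw [sum_quadratic]; ring
  have hdrift : ∑ i, (S / n - p i) * pderiv' (symmetricQuadratic α β δ) i p =
      2 * δ * (S ^ 2 / n - ∑ j, p j ^ 2) :=
    calc _ = ∑ i, (S / n * (α + 2 * β * S) + (2 * δ * S / n - α - 2 * β * S) * p i
              + -(2 * δ) * p i ^ 2) :=
          sum_congr rfl fun i _ => by rw [pderiv'_symmetricQuadratic]; ring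
      _ = _ := by rw [sum_quadratic]; field_simp; ring
  rw [neutralGenerator, hdrift, hdiffusion]

theorem biasGenerator_symmetricQuadratic_linear (γ α : ℝ) (p : Fin n → ℝ) :
    biasGenerator γ (symmetricQuadratic α 0 0) p =
      (γ / (2 * (n - 1))) * (α * (2 * ((n - 1) * ∑ j, p j - (∑ j, p j) ^ 2 + ∑ j, p j ^ 2))) := by
  set S := ∑ j, p j
  have hmigration :
      ∑ i, ((1 - 2 * p i) * (∑ j ∈ univ.erase i, p j) + ((n : ℝ) - 1) * p i) *
          pderiv' (symmetricQuadratic α 0 0) i p =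
        α * (2 * ((n - 1) * S - S ^ 2 + ∑ j, p j ^ 2)) :=
    calc _ = ∑ i, (α * S + α * (n - 2 - 2 * S) * p i + 2 * α * p i ^ 2) :=
          sum_congr rfl fun i _ => by
            rw [pderiv'_symmetricQuadratic, sum_erase_eq_sub (mem_univ i)]; ring
      _ = _ := by rw [sum_quadratic]; ring
  rw [biasGenerator, hmigration]

end SymmetricQuadratic

theorem stmt1_general (n : ℕ) (hn : 2 ≤ n) (γ : ℝ)
    (π0 π1 : (Fin n → ℝ) → ℝ)
    (hπ0 : ∀ p : Fin n → ℝ, π0 p = (∑ i, p i) / n)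
    (hπ1 : ∀ p : Fin n → ℝ, π1 p =
      -((∑ i, p i) / n) * (((n : ℝ) - 1) + n * γ * (1 - (∑ i, p i) / n))
        + (2 / n) * ∑ i, ∑ j, if i < j then p i * p j else 0)
    (p : Fin n → ℝ) :
    ((∑ i, p i * (1 - p i) / 2 * pderiv2' π0 i p)
      + ((n : ℝ) * γ / (2 * ((n : ℝ) - 1))) *
          ∑ i, ((∑ j, p j) / n - p i) * pderiv' π0 i p = 0)
    ∧
    ((∑ i, p i * (1 - p i) / 2 * pderiv2' π1 i p)
      + ((n : ℝ) * γ / (2 * ((n : ℝ) - 1))) *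
          ∑ i, ((∑ j, p j) / n - p i) * pderiv' π1 i p
      = (γ / (2 * ((n : ℝ) - 1))) *
          ∑ i, ((1 - 2 * p i) * (∑ j ∈ Finset.univ.erase i, p j)
                  + ((n : ℝ) - 1) * p i) * pderiv' π0 i p) := by
  have hn0 : n ≠ 0 := by omega
  have hn1 : (n : ℝ) - 1 ≠ 0 := by
    have : (2 : ℝ) ≤ n := by exact_mod_cast hn
    linarith
  obtain rfl : π0 = symmetricQuadratic (1 / n) 0 0 := funext fun q => by
    rw [hπ0, symmetricQuadratic]; ring
  obtain rfl : π1 = symmetricQuadratic (-((n - 1) / n) - γ) ((γ + 1) / n) (-1 / n) :=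
    funext fun q => by
      rw [hπ1, symmetricQuadratic, div_mul_eq_mul_div, two_mul_sum_sum_ite_lt]
      field_simp
      ring
  change neutralGenerator γ _ p = 0 ∧ neutralGenerator γ _ p = biasGenerator γ _ p
  rw [neutralGenerator_symmetricQuadratic hn0, neutralGenerator_symmetricQuadratic hn0,
    biasGenerator_symmetricQuadratic_linear]
  constructor
  · ring
  · field_simp
    ring

/-- with π⁽⁰⁾(p)=p̄ and
π⁽¹⁾(p) = −p̄{(n−1)+nγ(1−p̄)} + (2/n)∑_{i<j}pᵢpⱼ, one has L₀π⁽⁰⁾ = 0 and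
L₀π⁽¹⁾ = L₁π⁽⁰⁾, so that π = π⁽⁰⁾ + bπ⁽¹⁾ satisfies (L₀ − bL₁)π = O(b²). -/
theorem stmt1 (n : ℕ) (hn : 2 ≤ n) (γ : ℝ) (hγ : 0 ≤ γ)
    (π0 π1 : (Fin n → ℝ) → ℝ)
    (hπ0 : ∀ p : Fin n → ℝ, π0 p = (∑ i, p i) / n)
    (hπ1 : ∀ p : Fin n → ℝ, π1 p =
      -((∑ i, p i) / n) * (((n : ℝ) - 1) + n * γ * (1 - (∑ i, p i) / n))
        + (2 / n) * ∑ i, ∑ j, if i < j then p i * p j else 0)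
    (p : Fin n → ℝ) (hp : ∀ i, p i ∈ Set.Icc (0:ℝ) 1) :
    ((∑ i, p i * (1 - p i) / 2 * pderiv2' π0 i p)
      + ((n : ℝ) * γ / (2 * ((n : ℝ) - 1))) *
          ∑ i, ((∑ j, p j) / n - p i) * pderiv' π0 i p = 0)
    ∧
    ((∑ i, p i * (1 - p i) / 2 * pderiv2' π1 i p)
      + ((n : ℝ) * γ / (2 * ((n : ℝ) - 1))) *
          ∑ i, ((∑ j, p j) / n - p i) * pderiv' π1 i p
      = (γ / (2 * ((n : ℝ) - 1))) *
          ∑ i, ((1 - 2 * p i) * (∑ j ∈ Finset.univ.erase i, p j)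
                  + ((n : ℝ) - 1) * p i) * pderiv' π0 i p) :=
  stmt1_general n hn γ π0 π1 hπ0 hπ1 p
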